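/- arXiv:funct-an/9301004 — 4 statements merged into one kernel-verified Lean document; each statement's English description precedes it below -/
import Mathlib

section
/- Let P be a self-adjoint kernel on ℝ × 𝕋 × ℤ of the form P(x,y,p) = f(x,y)·δ₁(p) + h(x,y)·δ₀(p) + conj(f(x-1,y))·δ₋₁(p), where f, h : ℝ × 𝕋 → ℂ are bounded, h real-valued, and convolution is (P*P)(x,y,p) = Σ_{q∈ℤ} P(x,y,q)·P(x+q,y,p-q). Then P*P = P if and only if for all (x,y): (1) f(x,y)·f(x+1,y) = 0, (2) f(x,y)·[h(x+1,y) + h(x,y) − 1] = 0, and (3) |f(x,y)|² + |f(x-1,y)|² = h(x,y)·(1 − h(x,y)). -/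
/-!
Convolving with the tridiagonal kernel `T` only shifts by `-1, 0, 1`, so `T * T` is supported on
`|p| ≤ 2` and its five coefficients are explicit. Those at `p = 2, 1, 0` are exactly the three
conditions at `x`; those at `p = -1, -2` are the conjugates of the first two conditions at `x - 1`
and `x - 2`, so they impose nothing new.
-/

open Complex

noncomputable def e (t : ℝ) : ℂ := Complex.exp (2 * Real.pi * Complex.I * t)

-- The circle variable `y` is a mere parameter of the product, so it is dropped here.
noncomputable def twistedConv (P Q : ℝ → ℤ → ℂ) (x : ℝ) (p : ℤ) : ℂ :=
  ∑' q : ℤ, P x q * Q (x + q) (p - q)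

def tridiag (f : ℝ → ℂ) (h : ℝ → ℝ) (x : ℝ) (p : ℤ) : ℂ :=
  f x * (if p = 1 then 1 else 0) + (h x : ℂ) * (if p = 0 then 1 else 0) +
    (starRingEnd ℂ) (f (x - 1)) * (if p = -1 then 1 else 0)

namespace tridiag

variable (f : ℝ → ℂ) (h : ℝ → ℝ) (x : ℝ)

@[simp] lemma apply_one : tridiag f h x 1 = f x := by simp [tridiag]

@[simp] lemma apply_zero : tridiag f h x 0 = h x := by simp [tridiag]

@[simp] lemma apply_neg_one : tridiag f h x (-1) = (starRingEnd ℂ) (f (x - 1)) := by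
  simp [tridiag]

lemma apply_eq_zero {p : ℤ} (hp : 1 < |p|) : tridiag f h x p = 0 := by
  have : p ≠ 1 ∧ p ≠ 0 ∧ p ≠ -1 := by grind
  simp [tridiag, this]

theorem twistedConv_left (Q : ℝ → ℤ → ℂ) (p : ℤ) :
    twistedConv (tridiag f h) Q x p =
      (starRingEnd ℂ) (f (x - 1)) * Q (x - 1) (p + 1) + h x * Q x p +
        f x * Q (x + 1) (p - 1) := by
  rw [twistedConv, tsum_eq_sum (s := {-1, 0, 1}) fun q hq => by
    rw [apply_eq_zero f h x (by simp at hq; grind), zero_mul]]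
  simp [sub_eq_add_neg, add_comm p, add_assoc]

section square

local notation "T" => tridiag f h

lemma twistedConv_self_apply_two : twistedConv T T x 2 = f x * f (x + 1) := by
  simp [twistedConv_left, apply_eq_zero]

lemma twistedConv_self_apply_one : twistedConv T T x 1 = f x * (h x + h (x + 1)) := by
  simp [twistedConv_left, apply_eq_zero]; ring

lemma twistedConv_self_apply_zero :
    twistedConv T T x 0 = ((‖f (x - 1)‖ ^ 2 + h x ^ 2 + ‖f x‖ ^ 2 : ℝ) : ℂ) := by
  simp [twistedConv_left, conj_mul', mul_conj', sq]

lemma twistedConv_self_apply_neg_one :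
    twistedConv T T x (-1) = (starRingEnd ℂ) (f (x - 1) * (h (x - 1) + h x)) := by
  simp [twistedConv_left, apply_eq_zero]; ring

lemma twistedConv_self_apply_neg_two :
    twistedConv T T x (-2) = (starRingEnd ℂ) (f (x - 2) * f (x - 2 + 1)) := by
  simp [twistedConv_left, apply_eq_zero]; ring_nf

lemma twistedConv_self_apply_eq_zero {p : ℤ} (hp : 2 < |p|) : twistedConv T T x p = 0 := by
  rw [twistedConv_left, apply_eq_zero, apply_eq_zero, apply_eq_zero] <;> grind

theorem twistedConv_self_eq_iff :
    (∀ x p, twistedConv T T x p = T x p) ↔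
      ∀ x, f x * f (x + 1) = 0 ∧ f x * ((h (x + 1) + h x - 1 : ℝ) : ℂ) = 0 ∧
        ‖f x‖ ^ 2 + ‖f (x - 1)‖ ^ 2 = h x * (1 - h x) := by
  constructor
  · intro H x
    have h2 := H x 2
    have h1 := H x 1
    have h0 := H x 0
    rw [twistedConv_self_apply_two, apply_eq_zero _ _ _ (by norm_num)] at h2
    rw [twistedConv_self_apply_one, apply_one] at h1
    rw [twistedConv_self_apply_zero, apply_zero, ofReal_inj] at h0
    refine ⟨h2, by push_cast; linear_combination h1, by linear_combination h0⟩
  · intro H x p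
    by_cases hp : 2 < |p|
    · rw [twistedConv_self_apply_eq_zero _ _ _ hp, apply_eq_zero _ _ _ (by omega)]
    obtain ⟨hp₁, hp₂⟩ := abs_le.mp (not_lt.mp hp)
    interval_cases p
    · rw [twistedConv_self_apply_neg_two, (H (x - 2)).1, map_zero,
        apply_eq_zero _ _ _ (by norm_num)]
    · have := (H (x - 1)).2.1
      rw [sub_add_cancel] at this
      rw [twistedConv_self_apply_neg_one, apply_neg_one, ← sub_eq_zero, ← map_sub, map_eq_zero]
      linear_combination (norm := (push_cast; ring)) this
    · rw [twistedConv_self_apply_zero, apply_zero, ofReal_inj]; linear_combination (H x).2.2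
    · rw [twistedConv_self_apply_one, apply_one]
      linear_combination (norm := (push_cast; ring)) (H x).2.1
    · rw [twistedConv_self_apply_two, (H x).1, apply_eq_zero _ _ _ (by norm_num)]

end square

end tridiag

theorem stmt0_general (f : ℝ → UnitAddCircle → ℂ) (h : ℝ → UnitAddCircle → ℝ)
    (P : ℝ → UnitAddCircle → ℤ → ℂ)
    (hP : ∀ x y p, P x y p =
      f x y * (if p = 1 then 1 else 0) + (h x y : ℂ) * (if p = 0 then 1 else 0) +
        (starRingEnd ℂ) (f (x - 1) y) * (if p = -1 then 1 else 0)) :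
    (∀ x y p, (∑' q : ℤ, P x y q * P (x + q) y (p - q)) = P x y p) ↔
      (∀ (x : ℝ) (y : UnitAddCircle),
        f x y * f (x + 1) y = 0 ∧
        f x y * ((h (x + 1) y + h x y - 1 : ℝ) : ℂ) = 0 ∧
        ‖f x y‖ ^ 2 + ‖f (x - 1) y‖ ^ 2 = h x y * (1 - h x y)) := by
  have hP_slice : ∀ y, (fun x p => P x y p) = tridiag (f · y) (h · y) :=
    fun y => funext₂ fun x p => hP x y p
  rw [forall_comm, forall_comm (β := UnitAddCircle)]
  refine forall_congr' fun y => ?_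
  simpa only [← hP_slice, twistedConv] using tridiag.twistedConv_self_eq_iff (f · y) (h · y)

/-- a kernel of the given tridiagonal form is idempotent under the
twisted convolution iff the three Rieffel conditions hold. -/
theorem stmt0 (f : ℝ → UnitAddCircle → ℂ) (h : ℝ → UnitAddCircle → ℝ)
    (hfb : ∃ M : ℝ, ∀ x y, ‖f x y‖ ≤ M)
    (hhb : ∃ M : ℝ, ∀ x y, |h x y| ≤ M)
    (P : ℝ → UnitAddCircle → ℤ → ℂ)
    (hP : ∀ x y p, P x y p =
      f x y * (if p = 1 then 1 else 0) + (h x y : ℂ) * (if p = 0 then 1 else 0) +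
        (starRingEnd ℂ) (f (x - 1) y) * (if p = -1 then 1 else 0)) :
    (∀ x y p, (∑' q : ℤ, P x y q * P (x + q) y (p - q)) = P x y p) ↔
      (∀ (x : ℝ) (y : UnitAddCircle),
        f x y * f (x + 1) y = 0 ∧
        f x y * ((h (x + 1) y + h x y - 1 : ℝ) : ℂ) = 0 ∧
        ‖f x y‖ ^ 2 + ‖f (x - 1) y‖ ^ 2 = h x y * (1 - h x y)) :=
  stmt0_general f h P hP
end

section
/- For every ζ ∈ [0, 1/2] there exist continuous functions F, H : 𝕋 → ℝ such that: (1) F(t)·F(t−ζ) = 0 for all t; (2) F(t)·[1 − H(t) − H(t−ζ)] = 0 for all t; (3) H(t)·(1 − H(t)) = F(t)² + F(t+ζ)² for all t; (4) ∫_𝕋 H = ζ; (5) 0 ≤ H(t) ≤ 1 for all t, and F vanishes on the image of [1/2, 1] in 𝕋. -/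
/-!
`H` is the tent of height `1` and half-width `ζ` centred at `0`, and `F` is the semicircle over
the arc `[0, ζ]` with `F² = H (1 - H)` there; both are written through the norm of the circle,
which makes them continuous. The supports of `F` and `F (· - ζ)` are arcs of length `ζ` whose
centres are `ζ` apart, so they are disjoint; on `[0, ζ]` the two sides of the tent satisfy
`H t + H (t - ζ) = 1`; and the area of the tent is `ζ`.
-/

open MeasureTheory Set

namespace UnitAddCircle

lemma exists_mem_Ico_coe_eq (t : UnitAddCircle) : ∃ x ∈ Ico (0 : ℝ) 1, (x : UnitAddCircle) = t := by
  obtain ⟨y, rfl⟩ := QuotientAddGroup.mk_surjective t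
  exact ⟨Int.fract y, ⟨Int.fract_nonneg y, Int.fract_lt_one y⟩, AddCircle.coe_fract y⟩

lemma coe_sub_one (x : ℝ) : ((x - 1 : ℝ) : UnitAddCircle) = x := by
  rw [← AddCircle.coe_add_period 1 (x - 1), sub_add_cancel]

lemma norm_coe_of_abs_le {x : ℝ} (hx : |x| ≤ 1 / 2) : ‖(x : UnitAddCircle)‖ = |x| :=
  (AddCircle.norm_coe_eq_abs_iff 1 one_ne_zero).2 (by simpa using hx)

lemma le_norm_coe_of_mem_Icc {a x : ℝ} (hx : x ∈ Icc a (1 - a)) : a ≤ ‖(x : UnitAddCircle)‖ := by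
  rw [norm_eq]
  rcases le_or_gt (round x) 0 with hn | hn
  · have : (round x : ℝ) ≤ 0 := by exact_mod_cast hn
    exact le_abs.2 (Or.inl (by linarith [hx.1]))
  · have : (1 : ℝ) ≤ round x := by exact_mod_cast hn
    exact le_abs.2 (Or.inr (by linarith [hx.2]))

end UnitAddCircle

lemma intervalIntegral.integral_comp_abs {f : ℝ → ℝ} (hf : Continuous f) {a : ℝ} (ha : 0 ≤ a) :
    ∫ x in -a..a, f |x| = 2 * ∫ x in 0..a, f x := by
  have hint : ∀ b c : ℝ, IntervalIntegrable (fun x => f |x|) volume b c :=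
    fun b c => (hf.comp continuous_abs).intervalIntegrable b c
  have hpos : ∫ x in 0..a, f |x| = ∫ x in 0..a, f x :=
    integral_congr fun x hx => by
      rw [uIcc_of_le ha] at hx
      rw [abs_of_nonneg hx.1]
  have hneg : ∫ x in -a..0, f |x| = ∫ x in 0..a, f |x| := by
    simpa using (integral_comp_neg (a := 0) (b := a) fun x => f |x|).symm
  rw [← integral_add_adjacent_intervals (hint _ 0) (hint 0 _), hneg, hpos]
  ring

lemma integral_max_zero_one_sub_div {ζ a : ℝ} (hζ : 0 < ζ) (ha : ζ ≤ a) :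
    ∫ x in 0..a, max 0 (1 - x / ζ) = ζ / 2 := by
  have hint : ∀ b c : ℝ, IntervalIntegrable (fun x => max 0 (1 - x / ζ)) volume b c :=
    fun b c => (by fun_prop : Continuous fun x : ℝ => max 0 (1 - x / ζ)).intervalIntegrable b c
  have hramp : ∫ x in 0..ζ, max 0 (1 - x / ζ) = ∫ x in 0..ζ, (1 - x / ζ) :=
    intervalIntegral.integral_congr fun x hx => by
      rw [uIcc_of_le hζ.le] at hx
      exact max_eq_right (sub_nonneg.2 (div_le_one_of_le₀ hx.2 hζ.le))
  have hzero : ∫ x in ζ..a, max 0 (1 - x / ζ) = ∫ _ in ζ..a, (0 : ℝ) :=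
    intervalIntegral.integral_congr fun x hx => by
      rw [uIcc_of_le ha] at hx
      exact max_eq_left (sub_nonpos.2 ((one_le_div hζ).2 hx.1))
  rw [← intervalIntegral.integral_add_adjacent_intervals (hint 0 ζ) (hint ζ a), hramp, hzero]
  simp [intervalIntegral.integral_sub, intervalIntegral.integral_div, integral_id]
  field_simp
  ring

noncomputable def rieffelH (ζ : ℝ) : C(UnitAddCircle, ℝ) where
  toFun t := max 0 (1 - ‖t‖ / ζ)

-- `Real.sqrt` vanishes on negative numbers, so this is supported on the arc `(0, ζ)`.
noncomputable def rieffelF (ζ : ℝ) : C(UnitAddCircle, ℝ) where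
  toFun t := √(1 / 4 - (‖t - (ζ / 2 : ℝ)‖ / ζ) ^ 2)

section

variable {ζ : ℝ}

lemma rieffelH_apply (t : UnitAddCircle) : rieffelH ζ t = max 0 (1 - ‖t‖ / ζ) := rfl

lemma rieffelF_apply (t : UnitAddCircle) :
    rieffelF ζ t = √(1 / 4 - (‖t - (ζ / 2 : ℝ)‖ / ζ) ^ 2) := rfl

lemma rieffelH_nonneg (t : UnitAddCircle) : 0 ≤ rieffelH ζ t := le_max_left _ _

lemma rieffelH_le_one (hζ : 0 ≤ ζ) (t : UnitAddCircle) : rieffelH ζ t ≤ 1 :=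
  max_le zero_le_one (by have := div_nonneg (norm_nonneg t) hζ; linarith)

lemma rieffelH_coe {x : ℝ} (hx : |x| ≤ 1 / 2) : rieffelH ζ x = max 0 (1 - |x| / ζ) := by
  rw [rieffelH_apply, UnitAddCircle.norm_coe_of_abs_le hx]

lemma rieffelH_coe_of_abs_le (hζ : 0 < ζ) (hζ' : ζ ≤ 1 / 2) {x : ℝ} (hx : |x| ≤ ζ) :
    rieffelH ζ x = 1 - |x| / ζ := by
  rw [rieffelH_coe (hx.trans hζ'), max_eq_right]
  exact sub_nonneg.2 (div_le_one_of_le₀ hx hζ.le)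

lemma rieffelH_coe_eq_zero (hζ : 0 < ζ) {x : ℝ} (hx : x ∈ Icc ζ (1 - ζ)) :
    rieffelH ζ x = 0 := by
  rw [rieffelH_apply, max_eq_left]
  rw [sub_nonpos, one_le_div hζ]
  exact UnitAddCircle.le_norm_coe_of_mem_Icc hx

lemma rieffelF_eq_zero_of_le_norm (hζ : 0 < ζ) {t : UnitAddCircle}
    (ht : ζ / 2 ≤ ‖t - (ζ / 2 : ℝ)‖) : rieffelF ζ t = 0 := by
  have : 1 / 2 ≤ ‖t - (ζ / 2 : ℝ)‖ / ζ := by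
    rw [le_div_iff₀ hζ]
    linarith
  rw [rieffelF_apply, Real.sqrt_eq_zero', sub_nonpos]
  nlinarith

lemma rieffelF_coe_eq_zero (hζ : 0 < ζ) {x : ℝ} (hx : x ∈ Icc ζ 1) : rieffelF ζ x = 0 := by
  refine rieffelF_eq_zero_of_le_norm hζ (UnitAddCircle.le_norm_coe_of_mem_Icc ?_)
  constructor <;> linarith [hx.1, hx.2]

lemma rieffelF_coe_sq (hζ : 0 < ζ) (hζ' : ζ ≤ 1 / 2) {x : ℝ} (hx : x ∈ Icc 0 ζ) :
    rieffelF ζ x ^ 2 = x / ζ * (1 - x / ζ) := by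
  have hnorm : ‖(x : UnitAddCircle) - (ζ / 2 : ℝ)‖ = |x - ζ / 2| :=
    UnitAddCircle.norm_coe_of_abs_le (abs_le.2 ⟨by linarith [hx.1], by linarith [hx.2]⟩)
  have hsemicircle : 1 / 4 - (|x - ζ / 2| / ζ) ^ 2 = x / ζ * (1 - x / ζ) := by
    rw [div_pow, sq_abs]
    field_simp
    ring
  rw [rieffelF_apply, hnorm, hsemicircle, Real.sq_sqrt]
  exact mul_nonneg (div_nonneg hx.1 hζ.le) (sub_nonneg.2 (div_le_one_of_le₀ hx.2 hζ.le))

lemma rieffelF_mul_rieffelF_sub (hζ : 0 < ζ) (hζ' : ζ ≤ 1 / 2) (t : UnitAddCircle) :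
    rieffelF ζ t * rieffelF ζ (t - ζ) = 0 := by
  by_contra h
  obtain ⟨h₁, h₂⟩ := mul_ne_zero_iff.1 h
  have hnear₁ := lt_of_not_ge (mt (rieffelF_eq_zero_of_le_norm hζ) h₁)
  have hnear₂ := lt_of_not_ge (mt (rieffelF_eq_zero_of_le_norm hζ) h₂)
  have hnorm : ‖(ζ : UnitAddCircle)‖ = ζ := by
    rw [UnitAddCircle.norm_coe_of_abs_le (by rwa [abs_of_pos hζ]), abs_of_pos hζ]
  have hsplit : (ζ : UnitAddCircle) = (t - (ζ / 2 : ℝ)) - (t - ζ - (ζ / 2 : ℝ)) := by abel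
  have := norm_sub_le (t - (ζ / 2 : ℝ)) (t - ζ - (ζ / 2 : ℝ))
  rw [← hsplit, hnorm] at this
  linarith

lemma rieffelF_mul_one_sub_rieffelH_sub_rieffelH_sub (hζ : 0 < ζ) (hζ' : ζ ≤ 1 / 2)
    (t : UnitAddCircle) : rieffelF ζ t * (1 - rieffelH ζ t - rieffelH ζ (t - ζ)) = 0 := by
  obtain ⟨x, ⟨hx₀, hx₁⟩, rfl⟩ := UnitAddCircle.exists_mem_Ico_coe_eq t
  rcases le_total ζ x with h | h
  · rw [rieffelF_coe_eq_zero hζ ⟨h, hx₁.le⟩, zero_mul]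
  have hright : rieffelH ζ x = 1 - x / ζ := by
    rw [rieffelH_coe_of_abs_le hζ hζ' (abs_le.2 ⟨by linarith, h⟩), abs_of_nonneg hx₀]
  have hleft : rieffelH ζ (x - ζ : ℝ) = 1 - (ζ - x) / ζ := by
    rw [rieffelH_coe_of_abs_le hζ hζ' (abs_le.2 ⟨by linarith, by linarith⟩),
      abs_of_nonpos (by linarith), neg_sub]
  rw [← AddCircle.coe_sub, hright, hleft]
  field_simp
  ring

lemma rieffelH_mul_one_sub_rieffelH (hζ : 0 < ζ) (hζ' : ζ ≤ 1 / 2) (t : UnitAddCircle) :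
    rieffelH ζ t * (1 - rieffelH ζ t) = rieffelF ζ t ^ 2 + rieffelF ζ (t + ζ) ^ 2 := by
  obtain ⟨x, ⟨hx₀, hx₁⟩, rfl⟩ := UnitAddCircle.exists_mem_Ico_coe_eq t
  rw [← AddCircle.coe_add]
  rcases le_total x ζ with h₁ | h₁
  · rw [rieffelH_coe_of_abs_le hζ hζ' (abs_le.2 ⟨by linarith, h₁⟩), abs_of_nonneg hx₀,
      rieffelF_coe_sq hζ hζ' ⟨hx₀, h₁⟩, rieffelF_coe_eq_zero hζ ⟨by linarith, by linarith⟩]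
    ring
  rcases le_total x (1 - ζ) with h₂ | h₂
  · rw [rieffelH_coe_eq_zero hζ ⟨h₁, h₂⟩, rieffelF_coe_eq_zero hζ ⟨h₁, hx₁.le⟩,
      rieffelF_coe_eq_zero hζ ⟨by linarith, by linarith⟩]
    ring
  · rw [← UnitAddCircle.coe_sub_one x, ← UnitAddCircle.coe_sub_one (x + ζ),
      rieffelH_coe_of_abs_le hζ hζ' (abs_le.2 ⟨by linarith, by linarith⟩),
      abs_of_nonpos (by linarith), UnitAddCircle.coe_sub_one,
      rieffelF_coe_eq_zero hζ ⟨by linarith, hx₁.le⟩,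
      rieffelF_coe_sq hζ hζ' ⟨by linarith, by linarith⟩]
    field_simp
    ring

lemma integral_rieffelH (hζ : 0 < ζ) (hζ' : ζ ≤ 1 / 2) : ∫ t, rieffelH ζ t = ζ := by
  have hcoe : ∀ x ∈ uIcc (-(1 / 2)) (1 / 2 : ℝ), rieffelH ζ x = max 0 (1 - |x| / ζ) :=
    fun x hx => rieffelH_coe (abs_le.2 (by rwa [uIcc_of_le (by norm_num)] at hx))
  rw [← UnitAddCircle.intervalIntegral_preimage (-(1 / 2)),
    show -(1 / 2) + 1 = (1 / 2 : ℝ) by norm_num, intervalIntegral.integral_congr hcoe,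
    intervalIntegral.integral_comp_abs (f := fun y => max 0 (1 - y / ζ)) (by fun_prop)
      (by norm_num),
    integral_max_zero_one_sub_div hζ hζ']
  ring

end

/-- existence of Rieffel's functions F, H on the circle for any ζ ∈ [0,1/2]. -/
theorem stmt1 (ζ : ℝ) (hζ : ζ ∈ Set.Icc (0 : ℝ) (1 / 2)) :
    ∃ F H : C(UnitAddCircle, ℝ),
      (∀ t : UnitAddCircle, F t * F (t - (ζ : UnitAddCircle)) = 0) ∧
      (∀ t : UnitAddCircle, F t * (1 - H t - H (t - (ζ : UnitAddCircle))) = 0) ∧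
      (∀ t : UnitAddCircle, H t * (1 - H t) = F t ^ 2 + F (t + (ζ : UnitAddCircle)) ^ 2) ∧
      (∫ t : UnitAddCircle, H t = ζ) ∧
      (∀ t : UnitAddCircle, 0 ≤ H t ∧ H t ≤ 1) ∧
      (∀ s ∈ Set.Icc (1 / 2 : ℝ) 1, F (s : UnitAddCircle) = 0) := by
  obtain ⟨hζ₀, hζ'⟩ := hζ
  rcases hζ₀.eq_or_lt with rfl | hζ
  · exact ⟨0, 0, by simp⟩
  exact ⟨rieffelF ζ, rieffelH ζ, rieffelF_mul_rieffelF_sub hζ hζ',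
    rieffelF_mul_one_sub_rieffelH_sub_rieffelH_sub hζ hζ', rieffelH_mul_one_sub_rieffelH hζ hζ',
    integral_rieffelH hζ hζ', fun t => ⟨rieffelH_nonneg t, rieffelH_le_one hζ.le t⟩,
    fun s hs => rieffelF_coe_eq_zero hζ ⟨hζ'.trans hs.1, hs.2⟩⟩
end

section
/- For f, g ∈ C_c(ℝ × 𝕋), with ⟨f,g⟩_D(x,y,p) = Σ_{k∈ℤ} e(ckp(y−pν)) f(x+k,y) conj(g(x−2pμ+k, y−2pν)) and ⟨g,f⟩_E(x,y,k) = Σ_{p∈ℤ} e(−ckp(y−pν)) conj(g(x−2pμ, y−2pν)) f(x−2pμ+k, y−2pν), the traces agree: ∫_{[0,1]²} ⟨f,g⟩_D(x,y,0) dx dy = ∫₀^{2μ} ∫₀^1 ⟨g,f⟩_E(x,y,0) dx dy, assuming μ > 0. -/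
open Complex MeasureTheory

/-- The D-valued inner product ⟨f,g⟩_D. -/
noncomputable def innD (c : ℤ) (μ ν : ℝ) (f g : ℝ → ℝ → ℂ) : ℝ → ℝ → ℤ → ℂ :=
  fun x y p => ∑' k : ℤ, e ((c : ℝ) * k * p * (y - p * ν)) * f (x + k) y *
    (starRingEnd ℂ) (g (x - 2 * p * μ + k) (y - 2 * p * ν))

/-- The E-valued inner product ⟨f,g⟩_E. -/
noncomputable def innE (c : ℤ) (μ ν : ℝ) (f g : ℝ → ℝ → ℂ) : ℝ → ℝ → ℤ → ℂ :=
  fun x y k => ∑' p : ℤ, e (-((c : ℝ) * k * p * (y - p * ν))) *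
    (starRingEnd ℂ) (f (x - 2 * p * μ) (y - 2 * p * ν)) * g (x - 2 * p * μ + k) (y - 2 * p * ν)

/-! At the zero fibre the phases `e(…)` are trivial, so with `h x y = f x y * conj (g x y)` both
traces integrate periodizations of `h`: `⟨f,g⟩_D(·,·,0)` sums the translates of `h` by `(k, 0)`,
`⟨g,f⟩_E(·,·,0)` those by `(2pμ, 2pν)`. The shift in `y` disappears after integrating over a period
in `y`, and integrating a periodization with period `T > 0` over `[0,T]` unfolds it into an integral
over `ℝ`. Hence both sides equal `∫ x, ∫ y in 0..1, h x y`. -/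

open Set Filter Function Metric

section Periodization

variable {E : Type*} [NormedAddCommGroup E] [NormedSpace ℝ E]

theorem MeasureTheory.Integrable.hasSum_intervalIntegral_comp_add_int_mul {f : ℝ → E}
    (hf : Integrable f) {T : ℝ} (hT : 0 < T) :
    HasSum (fun n : ℤ => ∫ x in 0..T, f (x + n * T)) (∫ x, f x) := by
  have h := hasSum_integral_iUnion (fun n : ℤ => measurableSet_Ioc)
    (pairwise_disjoint_Ioc_add_zsmul 0 T) hf.integrableOn
  rw [iUnion_Ioc_add_zsmul hT, setIntegral_univ] at h
  convert h using 2 with n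
  rw [intervalIntegral.integral_comp_add_right, intervalIntegral.integral_of_le (by linarith)]
  simp only [zero_add, zsmul_eq_mul, Int.cast_add, Int.cast_one, add_one_mul, add_comm T]

theorem Bornology.IsBounded.eventually_cofinite_comp_add_int_mul_eq_zero {M : Type*} [Zero M]
    {φ : ℝ → M} (hφ : Bornology.IsBounded (support φ)) {s : Set ℝ}
    (hs : Bornology.IsBounded s) {T : ℝ} (hT : T ≠ 0) :
    ∀ᶠ n : ℤ in Filter.cofinite, ∀ x ∈ s, φ (x + n * T) = 0 := by
  obtain ⟨r, hr⟩ := hs.subset_closedBall 0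
  obtain ⟨R, hR⟩ := hφ.subset_closedBall 0
  filter_upwards [(Int.tendsto_zmultiplesHom_cofinite hT).eventually
    (isCompact_closedBall (0 : ℝ) (r + R)).compl_mem_cocompact] with n hn x hx
  by_contra hne
  have hxr := hr hx
  have hxR := hR hne
  simp only [mem_closedBall, dist_zero_right, Real.norm_eq_abs] at hxr hxR
  refine hn ?_
  simp only [zmultiplesHom_apply, zsmul_eq_mul, mem_closedBall, dist_zero_right,
    Real.norm_eq_abs]
  calc |n * T| = |(x + n * T) - x| := by rw [add_sub_cancel_left]
    _ ≤ |x + n * T| + |x| := abs_sub _ _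
    _ ≤ r + R := by linarith

theorem intervalIntegral.integral_tsum_of_eventually_cofinite_eq_zero {ι : Type*}
    {G : ι → ℝ → E} {a b : ℝ} (hG : ∀ n, IntervalIntegrable (G n) volume a b)
    (h0 : ∀ᶠ n in cofinite, ∀ x ∈ uIcc a b, G n x = 0) :
    ∫ x in a..b, ∑' n, G n x = ∑' n, ∫ x in a..b, G n x := by
  set s := (eventually_cofinite.1 h0).toFinset
  have hs : ∀ n ∉ s, ∀ x ∈ uIcc a b, G n x = 0 := by simp [s]
  calc ∫ x in a..b, ∑' n, G n x = ∫ x in a..b, ∑ n ∈ s, G n x :=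
        integral_congr fun x hx => tsum_eq_sum fun n hn => hs n hn x hx
    _ = ∑ n ∈ s, ∫ x in a..b, G n x := integral_finsetSum fun n _ => hG n
    _ = ∑' n, ∫ x in a..b, G n x := by
        refine (tsum_eq_sum fun n hn => ?_).symm
        rw [integral_congr (g := fun _ => 0) (hs n hn), integral_zero]

theorem Continuous.intervalIntegral_tsum_comp_add_int_mul {f : ℝ → E} (hf : Continuous f)
    (hfc : HasCompactSupport f) {T : ℝ} (hT : 0 < T) :
    ∫ x in 0..T, ∑' n : ℤ, f (x + n * T) = ∫ x, f x := by
  have hsupp := hfc.isCompact.isBounded.subset (subset_tsupport f)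
  rw [intervalIntegral.integral_tsum_of_eventually_cofinite_eq_zero
    (G := fun (n : ℤ) x => f (x + n * T))
    (fun n => (hf.comp (continuous_add_const _)).intervalIntegrable _ _)
    (hsupp.eventually_cofinite_comp_add_int_mul_eq_zero isCompact_uIcc.isBounded hT.ne')]
  exact ((hf.integrable_of_hasCompactSupport hfc).hasSum_intervalIntegral_comp_add_int_mul
    hT).tsum_eq

theorem Function.Periodic.intervalIntegral_comp_add_right {g : ℝ → E} {T : ℝ} (hg : Periodic g T)
    (d : ℝ) : ∫ y in 0..T, g (y + d) = ∫ y in 0..T, g y := by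
  rw [intervalIntegral.integral_comp_add_right, zero_add, add_comm T,
    hg.intervalIntegral_add_eq d 0, zero_add]

theorem intervalIntegral_intervalIntegral_tsum_comp_add_int_mul {h : ℝ → ℝ → E}
    (hc : Continuous (uncurry h)) (hs : Bornology.IsBounded (support h))
    (hp : ∀ x, Periodic (h x) 1) {T : ℝ} (hT : 0 < T) (t : ℝ) :
    ∫ x in 0..T, ∫ y in 0..1, ∑' n : ℤ, h (x + n * T) (y + n * t) =
      ∫ x, ∫ y in 0..1, h x y := by
  set F : ℝ → E := fun x => ∫ y in 0..1, h x y
  have hFc : Continuous F :=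
    intervalIntegral.continuous_parametric_intervalIntegral_of_continuous' hc 0 1
  have hFs : HasCompactSupport F := by
    refine (hs.subset fun x hx => ?_).isCompact_closure
    contrapose! hx
    simp [F, notMem_support.mp hx]
  rw [← hFc.intervalIntegral_tsum_comp_add_int_mul hFs hT]
  refine intervalIntegral.integral_congr fun x _ => ?_
  have h0 := hs.eventually_cofinite_comp_add_int_mul_eq_zero
    (Bornology.isBounded_singleton (x := x)) hT.ne'
  rw [intervalIntegral.integral_tsum_of_eventually_cofinite_eq_zero
    (G := fun (n : ℤ) y => h (x + n * T) (y + n * t))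
    (fun n => ((hc.uncurry_left _).comp (continuous_add_const _)).intervalIntegrable _ _)
    (h0.mono fun n hn y _ => by rw [hn x rfl, Pi.zero_apply])]
  exact tsum_congr fun n => (hp _).intervalIntegral_comp_add_right _

end Periodization

theorem innD_apply_zero (c : ℤ) (μ ν : ℝ) (f g : ℝ → ℝ → ℂ) (x y : ℝ) :
    innD c μ ν f g x y 0 = ∑' k : ℤ, f (x + k) y * starRingEnd ℂ (g (x + k) y) := by
  simp [innD, e]

theorem innE_apply_zero (c : ℤ) (μ ν : ℝ) (f g : ℝ → ℝ → ℂ) (x y : ℝ) :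
    innE c μ ν g f x y 0 = ∑' p : ℤ, f (x - 2 * p * μ) (y - 2 * p * ν) *
      starRingEnd ℂ (g (x - 2 * p * μ) (y - 2 * p * ν)) := by
  simp [innE, e, mul_comm]

theorem stmt11_general (c : ℤ) (μ ν : ℝ) (hμ : 0 < μ) (f g : ℝ → ℝ → ℂ)
    (hfc : Continuous fun q : ℝ × ℝ => f q.1 q.2)
    (hgc : Continuous fun q : ℝ × ℝ => g q.1 q.2)
    (hfp : ∀ x y, f x (y + 1) = f x y) (hgp : ∀ x y, g x (y + 1) = g x y)
    (hfs : ∃ R : ℝ, ∀ x y, R < |x| → f x y = 0) :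
    (∫ x in (0 : ℝ)..1, ∫ y in (0 : ℝ)..1, innD c μ ν f g x y 0) =
      ∫ x in (0 : ℝ)..(2 * μ), ∫ y in (0 : ℝ)..1, innE c μ ν g f x y 0 := by
  obtain ⟨R, hR⟩ := hfs
  set h : ℝ → ℝ → ℂ := fun x y => f x y * starRingEnd ℂ (g x y)
  have hc : Continuous (uncurry h) := hfc.mul (continuous_star.comp hgc)
  have hs : Bornology.IsBounded (support h) := by
    refine (isBounded_closedBall (x := 0) (r := R)).subset fun x hx => ?_
    rw [mem_closedBall, dist_zero_right, Real.norm_eq_abs]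
    by_contra! hxR
    exact hx (funext fun y => by simp [h, hR x y hxR])
  have hp : ∀ x, Periodic (h x) 1 := fun x y => by simp only [h, hfp, hgp]
  calc (∫ x in (0 : ℝ)..1, ∫ y in (0 : ℝ)..1, innD c μ ν f g x y 0)
      = ∫ x in (0 : ℝ)..1, ∫ y in (0 : ℝ)..1, ∑' n : ℤ, h (x + n * 1) (y + n * 0) := by
        simp only [innD_apply_zero, mul_one, mul_zero, add_zero, h]
    _ = ∫ x, ∫ y in (0 : ℝ)..1, h x y :=
        intervalIntegral_intervalIntegral_tsum_comp_add_int_mul hc hs hp one_pos 0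
    _ = ∫ x in (0 : ℝ)..(2 * μ), ∫ y in (0 : ℝ)..1,
          ∑' n : ℤ, h (x + n * (2 * μ)) (y + n * (2 * ν)) :=
        (intervalIntegral_intervalIntegral_tsum_comp_add_int_mul hc hs hp (by positivity) _).symm
    _ = ∫ x in (0 : ℝ)..(2 * μ), ∫ y in (0 : ℝ)..1, innE c μ ν g f x y 0 := by
        refine intervalIntegral.integral_congr fun x _ =>
          intervalIntegral.integral_congr fun y _ => ?_
        rw [innE_apply_zero, ← (Equiv.neg ℤ).tsum_eq]
        refine tsum_congr fun p => ?_
        rw [Equiv.neg_apply, Int.cast_neg, show x + -p * (2 * μ) = x - 2 * p * μ by ring,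
          show y + -p * (2 * ν) = y - 2 * p * ν by ring]

/-- τ_D(⟨f,g⟩_D) = τ_E(⟨g,f⟩_E). -/
theorem stmt11 (c : ℤ) (hc : 1 ≤ c) (μ ν : ℝ) (hμ : 0 < μ) (f g : ℝ → ℝ → ℂ)
    (hfc : Continuous fun q : ℝ × ℝ => f q.1 q.2)
    (hgc : Continuous fun q : ℝ × ℝ => g q.1 q.2)
    (hfp : ∀ x y, f x (y + 1) = f x y) (hgp : ∀ x y, g x (y + 1) = g x y)
    (hfs : ∃ R : ℝ, ∀ x y, R < |x| → f x y = 0)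
    (hgs : ∃ R : ℝ, ∀ x y, R < |x| → g x y = 0) :
    (∫ x in (0 : ℝ)..1, ∫ y in (0 : ℝ)..1, innD c μ ν f g x y 0) =
      ∫ x in (0 : ℝ)..(2 * μ), ∫ y in (0 : ℝ)..1, innE c μ ν g f x y 0 :=
  stmt11_general c μ ν hμ f g hfc hgc hfp hgp hfs
end

section
/- Define J : D₀^{(μ,ν)} → D₀^{(−μ,−ν)} by (JΦ)(x,y,p) = Φ(−x,−y,p). Then J is a well-defined *-algebra isomorphism: JΦ satisfies the covariance condition with parameters (−μ,−ν), J(Φ*Ψ) = (JΦ)*(JΨ) (convolutions with parameters (μ,ν) and (−μ,−ν) respectively), J(Φ*) = (JΦ)*, and τ(JΦ) = τ(Φ). -/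
open Complex MeasureTheory

/-- Membership in D₀^{(μ',ν')} (covariance depends only on c and ν'). -/
def InD0 (c : ℤ) (ν : ℝ) (Φ : ℝ → ℝ → ℤ → ℂ) : Prop :=
  (∀ p : ℤ, Continuous fun q : ℝ × ℝ => Φ q.1 q.2 p) ∧
  (∀ x y p, Φ x (y + 1) p = Φ x y p) ∧
  (∃ N : ℕ, ∀ x y (p : ℤ), (N : ℤ) < |p| → Φ x y p = 0) ∧
  (∀ (k p : ℤ) (x y : ℝ),
    Φ (x + k) y p = e (-((c : ℝ) * k * p * (y - p * ν))) * Φ x y p)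

/-- Convolution product for parameters (μ', ν'). -/
noncomputable def conv (μ ν : ℝ) (Φ Ψ : ℝ → ℝ → ℤ → ℂ) : ℝ → ℝ → ℤ → ℂ :=
  fun x y p => ∑' q : ℤ, Φ x y q * Ψ (x + 2 * q * μ) (y + 2 * q * ν) (p - q)

/-- Adjoint for parameters (μ', ν'). -/
noncomputable def adj (μ ν : ℝ) (Φ : ℝ → ℝ → ℤ → ℂ) : ℝ → ℝ → ℤ → ℂ :=
  fun x y p => (starRingEnd ℂ) (Φ (x + 2 * p * μ) (y + 2 * p * ν) (-p))

/-- Trace. -/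
noncomputable def tauD (Φ : ℝ → ℝ → ℤ → ℂ) : ℂ :=
  ∫ x in (0 : ℝ)..1, ∫ y in (0 : ℝ)..1, Φ x y 0

/-- The map J: (JΦ)(x,y,p) = Φ(−x,−y,p). -/
def Jneg (Φ : ℝ → ℝ → ℤ → ℂ) : ℝ → ℝ → ℤ → ℂ := fun x y p => Φ (-x) (-y) p

lemma int_neg_periodic (f : ℝ → ℂ) (hf : ∀ y, f (y + 1) = f y) :
    ∫ y in (0 : ℝ)..1, f (-y) = ∫ y in (0 : ℝ)..1, f y := by
  rw [intervalIntegral.integral_comp_neg, neg_zero]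
  have hper : Function.Periodic f 1 := hf
  have h := hper.intervalIntegral_add_eq (-1) 0
  norm_num at h
  exact h

/-- J is a trace-preserving *-isomorphism D₀^{(μ,ν)} → D₀^{(−μ,−ν)}. -/
theorem stmt14 (c : ℤ) (hc : 1 ≤ c) (μ ν : ℝ) :
    ∀ Φ Ψ : ℝ → ℝ → ℤ → ℂ, InD0 c ν Φ → InD0 c ν Ψ →
      InD0 c (-ν) (Jneg Φ) ∧
      Jneg (conv μ ν Φ Ψ) = conv (-μ) (-ν) (Jneg Φ) (Jneg Ψ) ∧
      Jneg (adj μ ν Φ) = adj (-μ) (-ν) (Jneg Φ) ∧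
      tauD (Jneg Φ) = tauD Φ := by
  intro Φ Ψ hΦ hΨ
  obtain ⟨hcont, hper, ⟨N, hN⟩, hcov⟩ := hΦ
  refine ⟨⟨?_, ?_, ?_, ?_⟩, ?_, ?_, ?_⟩
  · intro p
    simp only [Jneg]
    exact (hcont p).comp ((continuous_fst.neg).prodMk (continuous_snd.neg))
  · intro x y p
    have := hper (-x) (-y - 1) p
    simpa [Jneg, show -(y+1) = -y - 1 + 1 - 1 + 0 by ring, sub_add_cancel] using
      (by rw [Jneg]; rw [show -(y+1) = (-y - 1) by ring, ← this]; ring_nf : Jneg Φ x (y+1) p = Φ (-x) (-y) p)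
  · exact ⟨N, fun x y p h => hN (-x) (-y) p h⟩
  · intro k p x y
    have h := hcov (-k) p (-x) (-y)
    simp only [Jneg]
    rw [show -(x + (k:ℝ)) = -x + ((-k : ℤ) : ℝ) by push_cast; ring, h]
    congr 2
    push_cast
    ring
  · funext x y p
    simp only [Jneg, conv]
    apply tsum_congr
    intro q
    congr 2 <;> ring
  · funext x y p
    simp only [Jneg, adj]
    congr 2 <;> ring
  · have hp0 : ∀ x y : ℝ, Φ (x + 1) y 0 = Φ x y 0 := by
      intro x y
      have := hcov 1 0 x y
      simpa [e] using this
    unfold tauD Jneg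
    have inner : ∀ x : ℝ, (∫ y in (0:ℝ)..1, Φ (-x) (-y) 0) = ∫ y in (0:ℝ)..1, Φ (-x) y 0 := by
      intro x
      exact int_neg_periodic (fun y => Φ (-x) y 0) (fun y => hper (-x) y 0)
    calc (∫ x in (0:ℝ)..1, ∫ y in (0:ℝ)..1, Φ (-x) (-y) 0)
        = ∫ x in (0:ℝ)..1, ∫ y in (0:ℝ)..1, Φ (-x) y 0 := by
          apply intervalIntegral.integral_congr; intro x _; exact inner x
      _ = ∫ x in (0:ℝ)..1, ∫ y in (0:ℝ)..1, Φ x y 0 :=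
          int_neg_periodic (fun x => ∫ y in (0:ℝ)..1, Φ x y 0)
            (fun x => by
              apply intervalIntegral.integral_congr; intro y _; exact hp0 x y)
end
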